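/- Let m ≥ 1, let A be an associative ring, let θ_1, …, θ_m ∈ A satisfy θ_i·θ_j = −θ_j·θ_i for i ≠ j and θ_i·θ_i = 0 for all i, and let u_1, …, u_m ∈ A be central elements with Σ_{i=1}^m u_i·θ_i = 0 and Σ_{i=1}^m u_i^2 = 1. Then θ_1·θ_2·⋯·θ_m = 0. -/

import Mathlib

/-!
Write `P = θ₁ ⋯ θ_m`. Since the `u_i` are central, `u_i P` is the product with `θ_i` replaced
by `u_i θ_i = -∑_{j ≠ i} u_j θ_j`; by multilinearity it is a combination of products in which
some `θ_j` occurs twice, and each of these vanishes because `θ_j` can be moved next to its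
second copy at the cost of signs. Hence `u_i P = 0` for all `i`, and
`P = (∑ u_i²) P = ∑ u_i (u_i P) = 0`.
-/

open Finset

section Anticommuting

variable {R : Type*} [Ring R]

theorem mul_list_prod_mul_eq_zero {x : R} (hx : x * x = 0) :
    ∀ {l : List R}, (∀ a ∈ l, x * a = -(a * x)) → x * l.prod * x = 0
  | [], _ => by simpa using hx
  | a :: l, hl => by
    have ih := mul_list_prod_mul_eq_zero hx fun b hb => hl b (List.mem_cons_of_mem a hb)
    calc x * (a :: l).prod * x = x * a * l.prod * x := by simp only [List.prod_cons, mul_assoc]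
      _ = -(a * (x * l.prod * x)) := by rw [hl a List.mem_cons_self]; noncomm_ring
      _ = 0 := by rw [ih, mul_zero, neg_zero]

theorem List.prod_eq_zero_of_duplicate {x : R} {l : List R} (hx : x * x = 0)
    (hl : ∀ a ∈ l, x * a = -(a * x)) (hdup : l.Duplicate x) : l.prod = 0 := by
  induction hdup with
  | @cons_mem l hmem =>
    obtain ⟨s, t, rfl⟩ := List.append_of_mem hmem
    have hs : ∀ a ∈ s, x * a = -(a * x) := fun a ha => hl a (by simp [ha])
    calc (x :: (s ++ x :: t)).prod = x * s.prod * x * t.prod := by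
          simp only [List.prod_cons, List.prod_append, mul_assoc]
      _ = 0 := by rw [mul_list_prod_mul_eq_zero hx hs, zero_mul]
  | @cons_duplicate y l _ ih =>
    rw [List.prod_cons, ih fun a ha => hl a (List.mem_cons_of_mem y ha), mul_zero]

theorem List.prod_eq_zero_of_not_nodup {l : List R} (hsq : ∀ a ∈ l, a * a = 0)
    (hanti : ∀ a ∈ l, ∀ b ∈ l, a * b = -(b * a)) (hl : ¬ l.Nodup) : l.prod = 0 := by
  obtain ⟨x, hx⟩ := List.exists_duplicate_iff_not_nodup.mpr hl
  exact List.prod_eq_zero_of_duplicate (hsq x hx.mem) (hanti x hx.mem) hx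

theorem List.prod_ofFn_update_eq_zero_of_ne {m : ℕ} (θ : Fin m → R)
    (hθ : ∀ i j : Fin m, i ≠ j → θ i * θ j = -(θ j * θ i))
    (hθ2 : ∀ i : Fin m, θ i * θ i = 0) {i j : Fin m} (hji : j ≠ i) :
    (List.ofFn (Function.update θ i (θ j))).prod = 0 := by
  have hrange : ∀ a ∈ List.ofFn (Function.update θ i (θ j)), a ∈ Set.range θ := by
    intro a ha
    obtain ⟨k, rfl⟩ := List.mem_ofFn.mp ha
    by_cases hk : k = i
    · exact ⟨j, by simp [hk]⟩
    · exact ⟨k, by simp [hk]⟩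
  refine List.prod_eq_zero_of_not_nodup
    (fun a ha => by obtain ⟨k, rfl⟩ := hrange a ha; exact hθ2 k) (fun a ha b hb => ?_) ?_
  · obtain ⟨k, rfl⟩ := hrange a ha
    obtain ⟨l, rfl⟩ := hrange b hb
    by_cases hkl : k = l
    · simp [hkl, hθ2]
    · exact hθ k l hkl
  · rw [List.nodup_ofFn]
    exact fun hinj => hji (hinj (by simp [hji])).symm

theorem central_mul_ofFn_prod_eq_zero {m : ℕ} (θ u : Fin m → R)
    (hθ : ∀ i j : Fin m, i ≠ j → θ i * θ j = -(θ j * θ i))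
    (hθ2 : ∀ i : Fin m, θ i * θ i = 0)
    (hu : ∀ (i : Fin m) (a : R), Commute (u i) a)
    (h1 : ∑ i : Fin m, u i * θ i = 0) (i : Fin m) :
    u i * (List.ofFn θ).prod = 0 := by
  -- Work with the `u_i` as scalars from the centre, so that the product is multilinear in them.
  let c (j : Fin m) : Subring.center R := ⟨u j, Subring.mem_center_iff.2 fun a => (hu j a).eq.symm⟩
  let f := MultilinearMap.mkPiAlgebraFin (Subring.center R) m R
  have hi : c i • θ i = -∑ j ∈ univ.erase i, c j • θ j := by
    rw [eq_neg_iff_add_eq_zero, add_sum_erase _ (fun j => c j • θ j) (mem_univ i)]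
    exact h1
  calc u i * (List.ofFn θ).prod = f.toLinearMap θ i (c i • θ i) := by
        rw [map_smul, MultilinearMap.toLinearMap_apply, Function.update_eq_self,
          MultilinearMap.mkPiAlgebraFin_apply]
        rfl
    _ = 0 := by
        rw [hi, map_neg, map_sum, neg_eq_zero]
        refine sum_eq_zero fun j hj => ?_
        rw [map_smul, MultilinearMap.toLinearMap_apply, MultilinearMap.mkPiAlgebraFin_apply,
          List.prod_ofFn_update_eq_zero_of_ne θ hθ hθ2 (ne_of_mem_erase hj), smul_zero]

end Anticommuting

theorem prod_theta_eq_zero_general (m : ℕ) {A : Type*} [Ring A]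
    (θ u : Fin m → A)
    (hθ : ∀ i j : Fin m, i ≠ j → θ i * θ j = -(θ j * θ i))
    (hθ2 : ∀ i : Fin m, θ i * θ i = 0)
    (hu : ∀ (i : Fin m) (a : A), Commute (u i) a)
    (h1 : ∑ i : Fin m, u i * θ i = 0)
    (h2 : ∑ i : Fin m, u i ^ 2 = 1) :
    (List.ofFn θ).prod = 0 := by
  calc (List.ofFn θ).prod = (∑ i, u i ^ 2) * (List.ofFn θ).prod := by rw [h2, one_mul]
    _ = ∑ i, u i * (u i * (List.ofFn θ).prod) := by simp only [sum_mul, sq, mul_assoc]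
    _ = 0 := sum_eq_zero fun i _ => by
        rw [central_mul_ofFn_prod_eq_zero θ u hθ hθ2 hu h1 i, mul_zero]

/-- If `θ₁, …, θ_m` pairwise anticommute and square to zero, the `u_i` are central,
`Σ u_i·θ_i = 0` and `Σ u_i² = 1`, then `θ₁·θ₂⋯θ_m = 0`. -/
theorem prod_theta_eq_zero (m : ℕ) (hm : 1 ≤ m) {A : Type*} [Ring A]
    (θ u : Fin m → A)
    (hθ : ∀ i j : Fin m, i ≠ j → θ i * θ j = -(θ j * θ i))
    (hθ2 : ∀ i : Fin m, θ i * θ i = 0)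
    (hu : ∀ (i : Fin m) (a : A), Commute (u i) a)
    (h1 : ∑ i : Fin m, u i * θ i = 0)
    (h2 : ∑ i : Fin m, u i ^ 2 = 1) :
    (List.ofFn θ).prod = 0 :=
  prod_theta_eq_zero_general m θ u hθ hθ2 hu h1 h2
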